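/- arXiv:2010.00266 — 4 statements merged into one kernel-verified Lean document; each statement's English description precedes it below -/
import Mathlib

section
/- Let u : A → B, v : A → C and w : B → C be functors with w ∘ u = v, and assume v is a Grothendieck fibration. Then for every object b of B, the canonical functor from the comma category u/b to the slice category C/w(b), sending an object (a, f : u(a) → b) to (v(a), w(f)) and a morphism g to v(g), is a Grothendieck fibration. -/
/-! A morphism of `u/b` is a morphism `g` of `A` compatible with the structure maps, and it lies
over a morphism `f` of `C/w(b)` exactly when `v(g)` lies over the underlying morphism `f.left`
of `C`. So a `v`-cartesian lift `φ : a ⟶ x.left` of `f.left` is a morphism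
`(a, u(φ) ≫ x.hom) ⟶ x` of `u/b` lying over `f`, and it remains strongly cartesian there: the
factorisations through `φ` provided by `A` automatically respect the structure maps, because
`u(φ) ≫ x.hom` is the structure map of the domain. -/

open CategoryTheory

universe v₁ u₁ v₂ u₂ v₃ u₃

namespace Paper

variable {A : Type u₁} [Category.{v₁} A] {B : Type u₂} [Category.{v₂} B]
  {C : Type u₃} [Category.{v₃} C]

/-- Given functors `u : A ⥤ B` and `w : B ⥤ C` (with `v := u ⋙ w`, so that `w ∘ u = v`)
and an object `b` of `B`, the canonical functor from the comma category `u/b` to the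
slice category `C/w(b)`, sending an object `(a, f : u(a) ⟶ b)` to `(v(a), w(f))` and a
morphism `g` to `v(g)`. -/
@[simps]
def commaToSlice (u : A ⥤ B) (w : B ⥤ C) (b : B) :
    CostructuredArrow u b ⥤ Over (w.obj b) where
  obj x := Over.mk (w.map x.hom)
  map {x y} g := Over.homMk ((u ⋙ w).map g.left)
    (by dsimp; rw [← w.map_comp, CostructuredArrow.w g])

lemma isHomLift_comp_iff {X Y Z : Type*} [Category X] [Category Y] [Category Z]
    (F : X ⥤ Y) (p : Y ⥤ Z) {R S : Z} (f : R ⟶ S) {a b : X} (φ : a ⟶ b) :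
    (F ⋙ p).IsHomLift f φ ↔ p.IsHomLift f (F.map φ) := by
  constructor <;> intro h
  · subst_hom_lift (F ⋙ p) f φ
    exact IsHomLift.map p (F.map φ)
  · exact IsHomLift.of_fac _ f φ (IsHomLift.domain_eq p f (F.map φ))
      (IsHomLift.codomain_eq p f (F.map φ)) (IsHomLift.fac p f (F.map φ))

lemma Over.isHomLift_iff_isHomLift_left {X : Type*} [Category X] {c : C} (p : X ⥤ Over c)
    {R S : Over c} (f : R ⟶ S) {a b : X} (φ : a ⟶ b) (ha : p.obj a = R) (hb : p.obj b = S) :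
    p.IsHomLift f φ ↔ (p ⋙ Over.forget c).IsHomLift f.left φ := by
  subst ha hb
  constructor <;> intro h
  · obtain rfl := IsHomLift.eq_of_isHomLift p f φ
    exact IsHomLift.map (p ⋙ Over.forget c) φ
  · -- `h` is stated over `(p.obj b).left`, not the reducibly different `(p ⋙ forget).obj b`
    obtain rfl : f = p.map φ := Over.OverMorphism.ext
      (@IsHomLift.eq_of_isHomLift _ _ _ _ (p ⋙ Over.forget c) a b f.left φ h)
    infer_instance

lemma Over.mk_map_comp_eq_of_isHomLift {X : Type*} [Category X] (q : X ⥤ C) {c : C} {R : Over c}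
    {a b : X} (f : R.left ⟶ q.obj b) (φ : a ⟶ b) (hφ : q.IsHomLift f φ) (g : q.obj b ⟶ c)
    (hf : f ≫ g = R.hom) : Over.mk (q.map φ ≫ g) = R := by
  obtain ⟨R, ⟨⟨⟩⟩, r⟩ := R
  obtain rfl : q.obj a = R := IsHomLift.domain_eq q f φ
  obtain rfl := IsHomLift.eq_of_isHomLift q f φ
  exact congrArg Over.mk hf

variable {u : A ⥤ B} {w : B ⥤ C} {b : B}

lemma commaToSlice_isHomLift_iff {x y : CostructuredArrow u b} {R S : Over (w.obj b)}
    (f : R ⟶ S) (ψ : y ⟶ x) (hy : (commaToSlice u w b).obj y = R)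
    (hx : (commaToSlice u w b).obj x = S) :
    (commaToSlice u w b).IsHomLift f ψ ↔ (u ⋙ w).IsHomLift f.left ψ.left :=
  (Over.isHomLift_iff_isHomLift_left _ f ψ hy hx).trans
    (isHomLift_comp_iff (CostructuredArrow.proj u b) (u ⋙ w) f.left ψ)

lemma commaToSlice_isStronglyCartesian {x y : CostructuredArrow u b} {R : Over (w.obj b)}
    (f : R ⟶ (commaToSlice u w b).obj x) (ψ : y ⟶ x) (hy : (commaToSlice u w b).obj y = R)
    [(u ⋙ w).IsStronglyCartesian f.left ψ.left] :
    (commaToSlice u w b).IsStronglyCartesian f ψ where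
  toIsHomLift := (commaToSlice_isHomLift_iff f ψ hy rfl).2 inferInstance
  universal_property' {z} g φ' hφ' := by
    have : (u ⋙ w).IsHomLift (g.left ≫ f.left : (u ⋙ w).obj z.left ⟶ _) φ'.left :=
      (commaToSlice_isHomLift_iff (g ≫ f) φ' rfl rfl).1 hφ'
    obtain ⟨χ, ⟨hχ, hχψ⟩, hχ_uniq⟩ :=
      Functor.IsStronglyCartesian.universal_property' (p := u ⋙ w) (f := f.left) (φ := ψ.left)
        g.left φ'.left
    have hχ_hom : u.map χ ≫ y.hom = z.hom := by
      rw [← CostructuredArrow.w ψ, ← u.map_comp_assoc, hχψ, CostructuredArrow.w φ']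
    refine ⟨CostructuredArrow.homMk χ hχ_hom,
      ⟨(commaToSlice_isHomLift_iff g _ rfl hy).2 hχ, CostructuredArrow.hom_ext _ _ hχψ⟩, ?_⟩
    rintro χ' ⟨hχ'_lift, hχ'ψ⟩
    exact CostructuredArrow.hom_ext _ _ <| hχ_uniq χ'.left
      ⟨(commaToSlice_isHomLift_iff g χ' rfl hy).1 hχ'_lift, congrArg CommaMorphism.left hχ'ψ⟩

/-- Let `u : A ⥤ B`, `v : A ⥤ C` and `w : B ⥤ C` be functors with `w ∘ u = v`
(here `v := u ⋙ w`), and assume `v` is a Grothendieck fibration. Then for every object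
`b` of `B`, the canonical functor `u/b ⥤ C/w(b)`, sending `(a, f : u(a) ⟶ b)` to
`(v(a), w(f))` and a morphism `g` to `v(g)`, is a Grothendieck fibration. -/
theorem commaToSlice_isFibered (u : A ⥤ B) (w : B ⥤ C) (hv : (u ⋙ w).IsFibered)
    (b : B) : (commaToSlice u w b).IsFibered := by
  have := hv
  refine Functor.IsFibered.of_exists_isStronglyCartesian fun x R f => ?_
  obtain ⟨a, φ, hφ⟩ : ∃ (a : A) (φ : a ⟶ x.left), (u ⋙ w).IsCartesian f.left φ :=
    Functor.IsPreFibered.exists_isCartesian' (p := u ⋙ w) f.left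
  have hR : (commaToSlice u w b).obj (CostructuredArrow.mk (u.map φ ≫ x.hom)) = R := by
    simpa using Over.mk_map_comp_eq_of_isHomLift (u ⋙ w) f.left φ hφ.toIsHomLift (w.map x.hom) (Over.w f)
  have : (u ⋙ w).IsStronglyCartesian f.left (CostructuredArrow.homMk' x φ).left :=
    inferInstanceAs ((u ⋙ w).IsStronglyCartesian f.left φ)
  exact ⟨_, CostructuredArrow.homMk' x φ, commaToSlice_isStronglyCartesian f _ hR⟩

end Paper
end

section
/- Let C be a small category and S = ([n]; c_1, …, c_n) an object of Δ≀C. The functor P : μ/S → Δ/[n], sending an object (([m], c), (φ; (f_{i',i})) : μ([m], c) → S) of the comma category μ/S to the object ([m], φ : [m] → [n]) of the slice Δ/[n], and a morphism (ψ, g) to ψ, is a Grothendieck fibration. -/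
open CategoryTheory

universe v u

namespace Paper


/-- An object of the wreath product `Δ ≀ C`: a tuple `([n]; c_1, …, c_n)` where
`c_1, …, c_n` are objects of `C` (indexed here by `Fin n`). -/
structure Wreath (C : Type u) [Category.{v} C] where
  /-- the integer `n` such that the underlying simplex is `[n]` -/
  len : ℕ
  /-- the objects `c_1, …, c_n` of `C` -/
  obj : Fin len → C

namespace Wreath

variable {C : Type u} [Category.{v} C]

/-- A morphism `(φ; (f_{i',i})) : ([n]; c_1, …, c_n) ⟶ ([n']; c'_1, …, c'_{n'})` of
`Δ ≀ C`: a monotone map `φ : [n] ⟶ [n']` together with morphisms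
`f_{i',i} : c_i ⟶ c'_{i'}` for each pair `(i, i')` with `1 ≤ i ≤ n` and
`φ(i-1) < i' ≤ φ(i)`. The index `i ∈ {1, …, n}` is represented by `i : Fin n`, so that
`i - 1` is `i.castSucc` and `i` is `i.succ` as elements of `[n] = Fin (n+1)`, and
similarly for `i'`. -/
structure Hom (x y : Wreath C) where
  /-- the underlying monotone map `φ : [n] ⟶ [n']` -/
  φ : Fin (x.len + 1) →o Fin (y.len + 1)
  /-- the components `f_{i',i} : c_i ⟶ c'_{i'}` for `φ(i-1) < i' ≤ φ(i)` -/
  app : ∀ (i : Fin x.len) (i' : Fin y.len),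
    φ i.castSucc < i'.succ → i'.succ ≤ φ i.succ → (x.obj i ⟶ y.obj i')

theorem Hom.ext' {x y : Wreath C} {F G : Hom x y} (hφ : F.φ = G.φ)
    (happ : ∀ i i' hF₁ hF₂ hG₁ hG₂, F.app i i' hF₁ hF₂ = G.app i i' hG₁ hG₂) :
    F = G := by
  obtain ⟨φF, appF⟩ := F
  obtain ⟨φG, appG⟩ := G
  obtain rfl : φF = φG := hφ
  simp only [mk.injEq, heq_eq_eq, true_and]
  funext i i' h₁ h₂
  exact happ i i' h₁ h₂ h₁ h₂

/-- Uniqueness of the middle index in the composition of morphisms of `Δ ≀ C`. -/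
theorem mid_unique {a b : ℕ} (ψ : Fin (a + 1) →o Fin (b + 1))
    {t : Fin b} {j j' : Fin a}
    (hC : ψ j.castSucc < t.succ) (hD : t.succ ≤ ψ j.succ)
    (hC' : ψ j'.castSucc < t.succ) (hD' : t.succ ≤ ψ j'.succ) : j = j' := by
  by_contra hne
  rcases Nat.lt_or_ge (j : ℕ) (j' : ℕ) with h | h
  · have hle : (j.succ : Fin (a + 1)) ≤ j'.castSucc := by
      simp only [Fin.le_def, Fin.val_succ, Fin.coe_castSucc]; omega
    exact absurd (hD.trans (ψ.monotone hle)) (not_le.mpr hC')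
  · have hne' : (j : ℕ) ≠ (j' : ℕ) := fun h => hne (Fin.ext h)
    have hle : (j'.succ : Fin (a + 1)) ≤ j.castSucc := by
      simp only [Fin.le_def, Fin.val_succ, Fin.coe_castSucc]; omega
    exact absurd (hD'.trans (ψ.monotone hle)) (not_le.mpr hC)

section comp

variable {x y z : Wreath C} (F : Hom x y) (G : Hom y z)
  (i : Fin x.len) (i'' : Fin z.len)

/-- The middle index `i'`, with `φ(i-1) < i' ≤ φ(i)` and `φ'(i'-1) < i'' ≤ φ'(i')`,
used in the composition of morphisms of `Δ ≀ C`. -/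
def midIdx (h₁ : G.φ (F.φ i.castSucc) < i''.succ) (h₂ : i''.succ ≤ G.φ (F.φ i.succ)) :
    Fin y.len :=
  ((Finset.univ.filter fun k => i''.succ ≤ G.φ k).min'
      ⟨F.φ i.succ, by simp only [Finset.mem_filter, Finset.mem_univ, true_and]; exact h₂⟩).pred
    (by
      intro h0
      set s : Finset (Fin (y.len + 1)) := Finset.univ.filter fun k => i''.succ ≤ G.φ k
      have hne : s.Nonempty :=
        ⟨F.φ i.succ, by simp only [s, Finset.mem_filter, Finset.mem_univ, true_and]; exact h₂⟩
      have hm : i''.succ ≤ G.φ (s.min' hne) := by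
        have := s.min'_mem hne
        simpa only [s, Finset.mem_filter, Finset.mem_univ, true_and] using this
      have hle : G.φ (s.min' hne) ≤ G.φ (F.φ i.castSucc) :=
        G.φ.monotone (h0 ▸ Fin.zero_le _)
      exact absurd h₁ (not_lt.mpr (hm.trans hle)))

variable (h₁ : G.φ (F.φ i.castSucc) < i''.succ) (h₂ : i''.succ ≤ G.φ (F.φ i.succ))

theorem midIdx_specA : F.φ i.castSucc < (midIdx F G i i'' h₁ h₂).succ := by
  rw [midIdx, Fin.succ_pred]
  set s : Finset (Fin (y.len + 1)) := Finset.univ.filter fun k => i''.succ ≤ G.φ k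
  have hne : s.Nonempty :=
    ⟨F.φ i.succ, by simp only [s, Finset.mem_filter, Finset.mem_univ, true_and]; exact h₂⟩
  have hm : i''.succ ≤ G.φ (s.min' hne) := by
    have := s.min'_mem hne
    simpa only [s, Finset.mem_filter, Finset.mem_univ, true_and] using this
  by_contra hle
  push_neg at hle
  exact absurd h₁ (not_lt.mpr (hm.trans (G.φ.monotone hle)))

theorem midIdx_specB : (midIdx F G i i'' h₁ h₂).succ ≤ F.φ i.succ := by
  rw [midIdx, Fin.succ_pred]
  exact Finset.min'_le _ _ (by simp only [Finset.mem_filter, Finset.mem_univ, true_and]; exact h₂)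

theorem midIdx_specC : G.φ (midIdx F G i i'' h₁ h₂).castSucc < i''.succ := by
  set s : Finset (Fin (y.len + 1)) := Finset.univ.filter fun k => i''.succ ≤ G.φ k
  have hne : s.Nonempty :=
    ⟨F.φ i.succ, by simp only [s, Finset.mem_filter, Finset.mem_univ, true_and]; exact h₂⟩
  by_contra hle
  push_neg at hle
  have hmem : (midIdx F G i i'' h₁ h₂).castSucc ∈ s := by
    simp only [s, Finset.mem_filter, Finset.mem_univ, true_and]; exact hle
  have hge := s.min'_le _ hmem
  have hlt : (midIdx F G i i'' h₁ h₂).castSucc < s.min' hne := by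
    have : ((midIdx F G i i'' h₁ h₂).succ : Fin (y.len + 1)) = s.min' hne := Fin.succ_pred _ _
    rw [← this]
    exact Fin.castSucc_lt_succ
  exact absurd hge (not_le.mpr hlt)

theorem midIdx_specD : i''.succ ≤ G.φ (midIdx F G i i'' h₁ h₂).succ := by
  rw [midIdx, Fin.succ_pred]
  set s : Finset (Fin (y.len + 1)) := Finset.univ.filter fun k => i''.succ ≤ G.φ k
  have hne : s.Nonempty :=
    ⟨F.φ i.succ, by simp only [s, Finset.mem_filter, Finset.mem_univ, true_and]; exact h₂⟩
  have := s.min'_mem hne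
  simpa only [s, Finset.mem_filter, Finset.mem_univ, true_and] using this

end comp

/-- Composition in `Δ ≀ C`: the underlying monotone maps compose, and the components are
`f''_{i'',i} := f'_{i'',i'} ∘ f_{i',i}` where `i'` is the unique index with
`φ(i-1) < i' ≤ φ(i)` and `φ'(i'-1) < i'' ≤ φ'(i')`. -/
def Hom.comp {x y z : Wreath C} (F : Hom x y) (G : Hom y z) : Hom x z where
  φ := G.φ.comp F.φ
  app i i'' h₁ h₂ :=
    F.app i (midIdx F G i i'' h₁ h₂) (midIdx_specA F G i i'' h₁ h₂)
        (midIdx_specB F G i i'' h₁ h₂) ≫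
      G.app (midIdx F G i i'' h₁ h₂) i'' (midIdx_specC F G i i'' h₁ h₂)
        (midIdx_specD F G i i'' h₁ h₂)

/-- The composition in `Δ ≀ C` can be computed using any valid middle index. -/
theorem Hom.comp_app_eq {x y z : Wreath C} (F : Hom x y) (G : Hom y z)
    {i : Fin x.len} {i'' : Fin z.len} (h₁ : G.φ (F.φ i.castSucc) < i''.succ)
    (h₂ : i''.succ ≤ G.φ (F.φ i.succ)) (j : Fin y.len)
    (hA : F.φ i.castSucc < j.succ) (hB : j.succ ≤ F.φ i.succ)
    (hC : G.φ j.castSucc < i''.succ) (hD : i''.succ ≤ G.φ j.succ) :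
    (F.comp G).app i i'' h₁ h₂ = F.app i j hA hB ≫ G.app j i'' hC hD := by
  have huniq : midIdx F G i i'' h₁ h₂ = j :=
    mid_unique G.φ (midIdx_specC F G i i'' h₁ h₂) (midIdx_specD F G i i'' h₁ h₂) hC hD
  subst huniq
  rfl

/-- The identity morphism of `Δ ≀ C`. -/
def Hom.id (x : Wreath C) : Hom x x where
  φ := OrderHom.id
  app i i' h₁ h₂ := eqToHom (congrArg x.obj (by
    have h₁' : (i : ℕ) < (i' : ℕ) + 1 := h₁
    have h₂' : (i' : ℕ) + 1 ≤ (i : ℕ) + 1 := h₂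
    exact Fin.ext (by omega)))

instance category : Category.{max v 0} (Wreath C) where
  Hom := Hom
  id := Hom.id
  comp := Hom.comp
  id_comp {x y} F := by
    refine Hom.ext' rfl fun i i'' h₁ h₂ hG₁ hG₂ => ?_
    refine (Hom.comp_app_eq (Hom.id x) F h₁ h₂ i
      (Fin.castSucc_lt_succ (i := i)) (le_refl _) hG₁ hG₂).trans ?_
    have e : (Hom.id x).app i i (Fin.castSucc_lt_succ (i := i)) (le_refl _) = 𝟙 (x.obj i) := rfl
    rw [e, Category.id_comp]
  comp_id {x y} F := by
    refine Hom.ext' rfl fun i i'' h₁ h₂ hG₁ hG₂ => ?_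
    refine (Hom.comp_app_eq F (Hom.id y) h₁ h₂ i'' hG₁ hG₂
      (Fin.castSucc_lt_succ (i := i'')) (le_refl _)).trans ?_
    have e : (Hom.id y).app i'' i'' (Fin.castSucc_lt_succ (i := i'')) (le_refl _) = 𝟙 (y.obj i'') := rfl
    rw [e, Category.comp_id]
  assoc {w x y z} F G H := by
    refine Hom.ext' rfl fun i l h₁ h₂ h₁' h₂' => ?_
    set k := midIdx (F.comp G) H i l h₁ h₂ with hk
    have kA := midIdx_specA (F.comp G) H i l h₁ h₂
    have kB := midIdx_specB (F.comp G) H i l h₁ h₂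
    have kC := midIdx_specC (F.comp G) H i l h₁ h₂
    have kD := midIdx_specD (F.comp G) H i l h₁ h₂
    set j := midIdx F G i k kA kB with hj
    have jA := midIdx_specA F G i k kA kB
    have jB := midIdx_specB F G i k kA kB
    have jC := midIdx_specC F G i k kA kB
    have jD := midIdx_specD F G i k kA kB
    have le₁ : G.φ j.castSucc ≤ k.castSucc := Fin.le_castSucc_iff.mpr jC
    have cond₁ : H.φ (G.φ j.castSucc) < l.succ := lt_of_le_of_lt (H.φ.monotone le₁) kC
    have cond₂ : l.succ ≤ H.φ (G.φ j.succ) := kD.trans (H.φ.monotone jD)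
    calc ((F.comp G).comp H).app i l h₁ h₂
        = (F.app i j jA jB ≫ G.app j k jC jD) ≫ H.app k l kC kD := by
          rw [show ((F.comp G).comp H).app i l h₁ h₂ =
            (F.comp G).app i k kA kB ≫ H.app k l kC kD from rfl,
            show (F.comp G).app i k kA kB = F.app i j jA jB ≫ G.app j k jC jD from rfl]
      _ = F.app i j jA jB ≫ (G.app j k jC jD ≫ H.app k l kC kD) := Category.assoc _ _ _
      _ = F.app i j jA jB ≫ (G.comp H).app j l cond₁ cond₂ := by
            rw [Hom.comp_app_eq G H cond₁ cond₂ k jC jD kC kD]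
      _ = (F.comp (G.comp H)).app i l h₁' h₂' := by
            rw [Hom.comp_app_eq F (G.comp H) h₁' h₂' j jA jB cond₁ cond₂]

/-- The functor `μ : Δ × C ⥤ Δ ≀ C`, sending `([n], c)` to `([n]; c, …, c)` and a
morphism `(φ, f)` to `(φ; (f_{i',i}))` with all components equal to `f`. -/
def mu (C : Type u) [Category.{v} C] : SimplexCategory × C ⥤ Wreath C where
  obj p := ⟨p.1.len, fun _ => p.2⟩
  map g := { φ := g.1.toOrderHom, app := fun _ _ _ _ => g.2 }
  map_id _ := Hom.ext' rfl fun _ _ _ _ _ _ => rfl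
  map_comp _ _ := Hom.ext' rfl fun _ _ _ _ _ _ => rfl

end Wreath


namespace Wreath

variable {C : Type u} [Category.{v} C]

/-- The functor `P : μ/S ⥤ Δ/[n]` associated to an object `S = ([n]; c_1, …, c_n)` of
`Δ ≀ C`, sending an object `(([m], c), (φ; (f_{i',i})) : μ([m], c) ⟶ S)` of the comma
category `μ/S` to the object `([m], φ : [m] ⟶ [n])` of the slice `Δ/[n]`, and a morphism
`(ψ, g)` to `ψ`. -/
@[simps]
def P (S : Wreath C) :
    CostructuredArrow (mu C) S ⥤ Over (SimplexCategory.mk S.len) where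
  obj x := Over.mk (SimplexCategory.Hom.mk x.hom.φ : x.left.1 ⟶ SimplexCategory.mk S.len)
  map {x y} g := Over.homMk g.left.1 (by
    apply SimplexCategory.Hom.ext
    exact congrArg Hom.φ (CostructuredArrow.w g))

end Wreath


end Paper

/-! A morphism of `μ/S` is a morphism `(ψ, g)` of `Δ × C` compatible with the structure maps,
and `P` only remembers `ψ`. Over an object `(([m], c), F)` and `ψ : [k] ⟶ [m]`, the morphism
`(ψ, 𝟙 c)` from `(([k], c), μ(ψ, 𝟙 c) ≫ F)` is strongly cartesian: a morphism `(ψ', g)` into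
`(([m], c), F)` with `ψ' = h ≫ ψ` factors through it as `(h, g)`, and this is the only
factorization because the `C`-component of the lift is an identity. -/

namespace CategoryTheory

variable {E D : Type*} [Category E] [Category D]

theorem Functor.isHomLift_iff_eq_map (p : E ⥤ D) {a b : E} (f : p.obj a ⟶ p.obj b)
    (φ : a ⟶ b) : p.IsHomLift f φ ↔ f = p.map φ :=
  ⟨fun _ => IsHomLift.eq_of_isHomLift p f φ, by rintro rfl; infer_instance⟩

theorem Functor.isStronglyCartesian_map_of_existsUnique (p : E ⥤ D) {a b : E} (φ : b ⟶ a)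
    (h : ∀ {a' : E} (g : p.obj a' ⟶ p.obj b) (φ' : a' ⟶ a), p.map φ' = g ≫ p.map φ →
      ∃! χ : a' ⟶ b, p.map χ = g ∧ χ ≫ φ = φ') :
    p.IsStronglyCartesian (p.map φ) φ where
  universal_property' g φ' hφ' := by
    simp only [isHomLift_iff_eq_map] at hφ' ⊢
    simpa only [eq_comm (a := g)] using h g φ' hφ'.symm

theorem Over.isFibered_of_isStronglyCartesian_homMk {X : D} (p : E ⥤ Over X)
    (h : ∀ (a : E) {Y : D} (ψ : Y ⟶ (p.obj a).left), ∃ (b : E) (φ : b ⟶ a),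
      p.IsStronglyCartesian (Over.homMk ψ : Over.mk (ψ ≫ (p.obj a).hom) ⟶ p.obj a) φ) :
    p.IsFibered := by
  refine Functor.IsFibered.of_exists_isStronglyCartesian fun a R f => ?_
  obtain ⟨Y, ⟨⟨⟩⟩, r⟩ := R
  obtain ⟨ψ, ⟨⟨⟨⟩⟩⟩, w⟩ := f
  change Y ⟶ (p.obj a).left at ψ
  obtain rfl : r = ψ ≫ (p.obj a).hom := by simpa using w.symm
  exact h a ψ

end CategoryTheory

namespace Paper

namespace Wreath

variable {C : Type u} [Category.{v} C] {S : Wreath C}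

def pullback (a : CostructuredArrow (mu C) S) {Y : SimplexCategory} (ψ : Y ⟶ a.left.1) :
    CostructuredArrow (mu C) S :=
  CostructuredArrow.mk ((mu C).map ((ψ, 𝟙 a.left.2) : (Y, a.left.2) ⟶ a.left) ≫ a.hom)

def pullbackHom (a : CostructuredArrow (mu C) S) {Y : SimplexCategory} (ψ : Y ⟶ a.left.1) :
    pullback a ψ ⟶ a :=
  CostructuredArrow.homMk' a ((ψ, 𝟙 a.left.2) : (Y, a.left.2) ⟶ a.left)

theorem hom_ext_of_P_map_eq {x y : CostructuredArrow (mu C) S} {χ χ' : x ⟶ y}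
    (h₁ : (P S).map χ = (P S).map χ') (h₂ : χ.left.2 = χ'.left.2) : χ = χ' :=
  CostructuredArrow.hom_ext _ _ (Prod.ext (congrArg CommaMorphism.left h₁) h₂)

section pullbackLift

variable {a a' : CostructuredArrow (mu C) S} {Y : SimplexCategory} {ψ : Y ⟶ a.left.1}
  (φ' : a' ⟶ a) (h : a'.left.1 ⟶ Y)

theorem pullbackLift_fac (hh : h ≫ ψ = φ'.left.1) :
    ((h, φ'.left.2) : a'.left ⟶ (Y, a.left.2)) ≫ ((ψ, 𝟙 a.left.2) : (Y, a.left.2) ⟶ a.left) =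
      φ'.left :=
  Prod.ext hh (Category.comp_id _)

def pullbackLift (hh : h ≫ ψ = φ'.left.1) : a' ⟶ pullback a ψ :=
  CostructuredArrow.homMk (h, φ'.left.2) <| calc
    (mu C).map ((h, φ'.left.2) : a'.left ⟶ (pullback a ψ).left) ≫ (pullback a ψ).hom
      = (mu C).map (((h, φ'.left.2) : a'.left ⟶ (Y, a.left.2)) ≫
          ((ψ, 𝟙 a.left.2) : (Y, a.left.2) ⟶ a.left)) ≫ a.hom := by
        rw [Functor.map_comp, Category.assoc]; rfl
    _ = a'.hom := by rw [pullbackLift_fac φ' h hh, CostructuredArrow.w φ']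

theorem pullbackLift_comp_pullbackHom (hh : h ≫ ψ = φ'.left.1) :
    pullbackLift φ' h hh ≫ pullbackHom a ψ = φ' :=
  CostructuredArrow.hom_ext _ _ (pullbackLift_fac φ' h hh)

end pullbackLift

theorem isStronglyCartesian_pullbackHom (a : CostructuredArrow (mu C) S) {Y : SimplexCategory}
    (ψ : Y ⟶ a.left.1) :
    (P S).IsStronglyCartesian ((P S).map (pullbackHom a ψ)) (pullbackHom a ψ) := by
  refine (P S).isStronglyCartesian_map_of_existsUnique _ fun {a'} g φ' hφ' => ?_
  have hg : g.left ≫ ψ = φ'.left.1 := (congrArg CommaMorphism.left hφ').symm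
  refine ⟨pullbackLift φ' g.left hg, ⟨rfl, pullbackLift_comp_pullbackHom φ' g.left hg⟩, ?_⟩
  rintro χ ⟨hχ, hχφ⟩
  refine hom_ext_of_P_map_eq hχ ?_
  exact (Category.comp_id _).symm.trans (congrArg (fun θ => θ.left.2) hχφ)

end Wreath

-- `(P S).map (pullbackHom a ψ)` is `Over.homMk ψ` by definition.
/-- Let `C` be a category and `S = ([n]; c_1, …, c_n)` an object of `Δ ≀ C`. The functor
`P : μ/S ⥤ Δ/[n]`, sending `(([m], c), (φ; (f_{i',i})) : μ([m], c) ⟶ S)` to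
`([m], φ : [m] ⟶ [n])` and a morphism `(ψ, g)` to `ψ`, is a Grothendieck fibration. -/
theorem P_isFibered {C : Type u} [Category.{v} C] (S : Wreath C) :
    (Wreath.P S).IsFibered :=
  Over.isFibered_of_isStronglyCartesian_homMk _ fun a _ ψ =>
    ⟨_, _, Wreath.isStronglyCartesian_pullbackHom a ψ⟩

end Paper
end

section
/- Let C be a small category, S = ([n]; c_1, …, c_n) an object of Δ≀C, and P : μ/S → Δ/[n] the functor sending (([m], c), (φ; (f_{i',i}))) to ([m], φ) and (ψ, g) to ψ. For every object ([m], φ : [m] → [n]) of Δ/[n], the fiber of P over it — the subcategory of μ/S of objects sent to ([m], φ) and morphisms sent to the identity — is isomorphic to the category of elements of the presheaf on C given by a ↦ ∏_{φ(0) < i ≤ φ(m)} Hom_C(a, c_i). -/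
/-!
An object of the fiber over `([m], φ)` is a morphism `(φ; (f_{i,j})) : μ([m], a) ⟶ S`, and a
morphism of the fiber is a map `g : a ⟶ a'` of `C` along which the components precompose.
Each `i` with `φ(0) < i ≤ φ(m)` lies in exactly one segment `φ(j-1) < i ≤ φ(j)`, so the
components of such a morphism are exactly a family `∏_{φ(0) < i ≤ φ(m)} Hom(a, c_i)`. Hence the
evident functor from the category of elements to the fiber is bijective on objects and fully
faithful, that is, an isomorphism of categories.
-/

open CategoryTheory

universe v u

namespace Paper


/-- The presheaf on `C` associated to an object `S = ([n]; c_1, …, c_n)` of `Δ ≀ C` and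
an object `([m], φ : [m] ⟶ [n])` of `Δ/[n]`, given on objects by
`a ↦ ∏_{φ(0) < i ≤ φ(m)} Hom_C(a, c_i)`. -/
@[simps]
def fiberPresheaf {C : Type u} [Category.{v} C] (S : Wreath C) (x : SimplexCategory)
    (φ : x ⟶ SimplexCategory.mk S.len) : Cᵒᵖ ⥤ Type v where
  obj a := ∀ i : Fin S.len, φ.toOrderHom 0 < i.succ →
    i.succ ≤ φ.toOrderHom (Fin.last x.len) → (a.unop ⟶ S.obj i)
  map g := TypeCat.ofHom fun f => fun i h₁ h₂ => g.unop ≫ f i h₁ h₂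

theorem exists_castSucc_lt_le_succ {α : Type*} [LinearOrder α] {m : ℕ} (f : Fin (m + 1) → α)
    {a : α} (h₀ : f 0 < a) (hm : a ≤ f (Fin.last m)) :
    ∃ j : Fin m, f j.castSucc < a ∧ a ≤ f j.succ := by
  by_contra! h
  have hlt : ∀ k, f k < a := fun k => Fin.induction h₀ (fun j hj => h j hj) k
  exact (hlt (Fin.last m)).not_ge hm

namespace Wreath

variable {C : Type u} [Category.{v} C]

section segment

variable {m n : ℕ} (ψ : Fin (m + 1) →o Fin (n + 1)) (i : Fin n)
  (h₀ : ψ 0 < i.succ) (hm : i.succ ≤ ψ (Fin.last m))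

noncomputable def segment : Fin m :=
  (exists_castSucc_lt_le_succ ψ h₀ hm).choose

theorem apply_castSucc_segment_lt : ψ (segment ψ i h₀ hm).castSucc < i.succ :=
  (exists_castSucc_lt_le_succ ψ h₀ hm).choose_spec.1

theorem le_apply_succ_segment : i.succ ≤ ψ (segment ψ i h₀ hm).succ :=
  (exists_castSucc_lt_le_succ ψ h₀ hm).choose_spec.2

theorem segment_eq {j : Fin m} (h₁ : ψ j.castSucc < i.succ) (h₂ : i.succ ≤ ψ j.succ) :
    segment ψ i h₀ hm = j :=
  mid_unique ψ (apply_castSucc_segment_lt ψ i h₀ hm) (le_apply_succ_segment ψ i h₀ hm) h₁ h₂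

end segment

theorem Hom.app_congr {m : ℕ} {c : C} {y : Wreath C} (F : Hom ⟨m, fun _ => c⟩ y) {j j' : Fin m}
    (e : j = j') (i : Fin y.len) (h₁ h₂ h₁' h₂') : F.app j i h₁ h₂ = F.app j' i h₁' h₂' := by
  subst e
  rfl

section family

variable {m : ℕ} {a b : C} (S : Wreath C)

abbrev Family (ψ : Fin (m + 1) →o Fin (S.len + 1)) (a : C) : Type v :=
  ∀ i : Fin S.len, ψ 0 < i.succ → i.succ ≤ ψ (Fin.last m) → (a ⟶ S.obj i)

variable {S}

noncomputable def Hom.toFamily (F : Hom ⟨m, fun _ => a⟩ S) : Family S F.φ a :=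
  fun i h₀ hm => F.app (segment F.φ i h₀ hm) i (apply_castSucc_segment_lt F.φ i h₀ hm)
    (le_apply_succ_segment F.φ i h₀ hm)

def Hom.ofFamily (ψ : Fin (m + 1) →o Fin (S.len + 1)) (ξ : Family S ψ a) :
    Hom ⟨m, fun _ => a⟩ S where
  φ := ψ
  app _ i h₁ h₂ := ξ i ((ψ.monotone (Fin.zero_le _)).trans_lt h₁)
    (h₂.trans (ψ.monotone (Fin.le_last _)))

theorem Hom.ofFamily_injective (ψ : Fin (m + 1) →o Fin (S.len + 1)) :
    Function.Injective (ofFamily (a := a) ψ) := by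
  intro ξ₁ ξ₂ h
  have happ : (ofFamily ψ ξ₁).app = (ofFamily ψ ξ₂).app := eq_of_heq (congr_arg_heq Hom.app h)
  funext i h₀ hm
  exact congrFun (congrFun (congrFun (congrFun happ (segment ψ i h₀ hm)) i)
    (apply_castSucc_segment_lt ψ i h₀ hm)) (le_apply_succ_segment ψ i h₀ hm)

theorem Hom.ofFamily_toFamily (F : Hom ⟨m, fun _ => a⟩ S) : ofFamily F.φ F.toFamily = F :=
  Hom.ext' rfl fun _ i _ _ h₁ h₂ => F.app_congr (segment_eq F.φ i _ _ h₁ h₂) i _ _ _ _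

theorem mu_map_comp_ofFamily (y : SimplexCategory) (g : a ⟶ b)
    (ψ : Fin (y.len + 1) →o Fin (S.len + 1)) (ξ : Family S ψ b) :
    (mu C).map ((𝟙 y, g) : (y, a) ⟶ (y, b)) ≫ Hom.ofFamily ψ ξ =
      Hom.ofFamily ψ fun i h₀ hm => g ≫ ξ i h₀ hm :=
  Hom.ext' rfl fun j _ h₁ h₂ _ _ =>
    Hom.comp_app_eq _ _ h₁ h₂ j Fin.castSucc_lt_succ le_rfl h₁ h₂

end family

section fiber

variable {S : Wreath C} {x : SimplexCategory} (φ : x ⟶ SimplexCategory.mk S.len)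

def elementsToComma :
    CostructuredArrow yoneda (fiberPresheaf S x φ) ⥤ CostructuredArrow (mu C) S where
  obj Y := CostructuredArrow.mk (Y := (x, Y.left))
    (Hom.ofFamily φ.toOrderHom (yonedaEquiv Y.hom))
  map {Y₁ Y₂} g := CostructuredArrow.homMk ((𝟙 x, g.left) : (x, Y₁.left) ⟶ (x, Y₂.left))
    ((mu_map_comp_ofFamily x g.left _ _).trans (congrArg (Hom.ofFamily φ.toOrderHom) (by
      rw [← CostructuredArrow.w g, ← yonedaEquiv_naturality]
      rfl)))
  map_id _ := by ext <;> rfl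
  map_comp _ _ := by ext <;> simp

theorem elementsToComma_comp_P :
    elementsToComma φ ⋙ P S = (Functor.const _).obj (Over.mk φ) :=
  CategoryTheory.Functor.ext (fun _ => rfl) fun _ _ _ => rfl

def elementsToFiber :
    CostructuredArrow yoneda (fiberPresheaf S x φ) ⥤ Functor.Fiber (P S) (Over.mk φ) :=
  Functor.Fiber.inducedFunctor (elementsToComma_comp_P φ)

variable {φ} {Y₁ Y₂ : CostructuredArrow yoneda (fiberPresheaf S x φ)}

theorem elementsToFiber_hom_left_fst
    (g : (elementsToFiber φ).obj Y₁ ⟶ (elementsToFiber φ).obj Y₂) : g.1.left.1 = 𝟙 x := by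
  have h := @IsHomLift.eq_of_isHomLift _ _ _ _ (P S) ((elementsToFiber φ).obj Y₁).1
    ((elementsToFiber φ).obj Y₂).1 (𝟙 (Over.mk φ)) g.1 g.2
  exact (congrArg CommaMorphism.left h).symm

theorem yoneda_map_comp_hom_of_elementsToFiber
    (g : (elementsToFiber φ).obj Y₁ ⟶ (elementsToFiber φ).obj Y₂) :
    yoneda.map g.1.left.2 ≫ Y₂.hom = Y₁.hom := by
  have w := CostructuredArrow.w g.1
  have hl : g.1.left = (𝟙 x, g.1.left.2) := Prod.ext (elementsToFiber_hom_left_fst g) rfl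
  rw [hl] at w
  apply yonedaEquiv.injective
  refine (yonedaEquiv_naturality Y₂.hom (g.1.left.2 : Y₁.left ⟶ Y₂.left)).symm.trans ?_
  exact Hom.ofFamily_injective _ ((mu_map_comp_ofFamily x g.1.left.2 _ _).symm.trans w)

instance : (elementsToFiber φ).Faithful where
  map_injective h := CostructuredArrow.hom_ext _ _ (congrArg (fun f => f.1.left.2) h)

instance : (elementsToFiber φ).Full where
  map_surjective g :=
    ⟨CostructuredArrow.homMk g.1.left.2 (yoneda_map_comp_hom_of_elementsToFiber g),
      Functor.Fiber.hom_ext (CostructuredArrow.hom_ext _ _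
        (Prod.ext (elementsToFiber_hom_left_fst g).symm rfl))⟩

theorem elementsToFiber_obj_injective : Function.Injective (elementsToFiber φ).obj := by
  rintro ⟨a₁, ⟨⟨⟩⟩, u₁⟩ ⟨a₂, ⟨⟨⟩⟩, u₂⟩ h
  have h' : (elementsToComma φ).obj (CostructuredArrow.mk u₁) =
      (elementsToComma φ).obj (CostructuredArrow.mk u₂) := congrArg Subtype.val h
  obtain rfl : a₁ = a₂ := congrArg (fun Z => Z.left.2) h'
  have hfam : ((elementsToComma φ).obj (CostructuredArrow.mk u₁)).hom ≍
      ((elementsToComma φ).obj (CostructuredArrow.mk u₂)).hom := by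
    rw [h']
  obtain rfl := yonedaEquiv.injective (Hom.ofFamily_injective _ (eq_of_heq hfam))
  rfl

theorem elementsToFiber_obj_surjective : Function.Surjective (elementsToFiber φ).obj := by
  rintro ⟨⟨⟨y, a⟩, ⟨⟨⟩⟩, ⟨ψ, app⟩⟩, hZ⟩
  have : y = x := congrArg Comma.left hZ
  subst y
  obtain rfl : SimplexCategory.Hom.mk ψ = φ :=
    eq_of_heq (congr_arg_heq (fun Y : Over (SimplexCategory.mk S.len) => Y.hom) hZ)
  refine ⟨CostructuredArrow.mk (yonedaEquiv.symm (Hom.toFamily ⟨ψ, app⟩)), ?_⟩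
  refine Subtype.ext (congrArg CostructuredArrow.mk ?_)
  exact (congrArg (Hom.ofFamily ψ) (yonedaEquiv.apply_symm_apply _)).trans
    (Hom.ofFamily_toFamily ⟨ψ, app⟩)

instance : (elementsToFiber φ).IsIso where
  bijective_obj := ⟨elementsToFiber_obj_injective, elementsToFiber_obj_surjective⟩

end fiber

end Wreath

/-- Let `C` be a category, `S = ([n]; c_1, …, c_n)` an object of `Δ ≀ C` and
`P : μ/S ⥤ Δ/[n]` the canonical functor. For every object `([m], φ : [m] ⟶ [n])` of
`Δ/[n]`, the fiber of `P` over it — the subcategory of `μ/S` of objects sent to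
`([m], φ)` and morphisms sent to the identity — is isomorphic to the category of
elements of the presheaf `a ↦ ∏_{φ(0) < i ≤ φ(m)} Hom_C(a, c_i)` on `C` (the category
of elements being realized as the comma category `CostructuredArrow yoneda F`, whose
objects are pairs `(a, x)` with `x ∈ F(a)` and whose morphisms `(a, x) ⟶ (a', x')` are
morphisms `g : a ⟶ a'` with `F(g)(x') = x`). -/
theorem fiber_iso_elements {C : Type u} [Category.{v} C] (S : Wreath C)
    (x : SimplexCategory) (φ : x ⟶ SimplexCategory.mk S.len) :
    ∃ (Φ : Functor.Fiber (Wreath.P S) (Over.mk φ) ⥤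
        CostructuredArrow yoneda (fiberPresheaf S x φ))
      (Ψ : CostructuredArrow yoneda (fiberPresheaf S x φ) ⥤
        Functor.Fiber (Wreath.P S) (Over.mk φ)),
      Φ ⋙ Ψ = 𝟭 _ ∧ Ψ ⋙ Φ = 𝟭 _ :=
  let e := (Wreath.elementsToFiber φ).asIsomorphism
  ⟨e.inverse, e.functor, e.counit_eq, e.unit_eq.symm⟩

end Paper
end

section
/- Let A and B be small aspherical categories, M a locally small category with a terminal object, and i : A → M, j : B → M functors. Assume that for every object a of A the presheaf N_i(i(a)) on A is aspherical and for every object b of B the presheaf N_j(j(b)) on B is aspherical. Assume moreover that for every morphism f of M, N_i(f) is a weak equivalence of presheaves on A if and only if N_j(f) is a weak equivalence of presheaves on B. Then for every object X of M, the presheaf N_i(X) on A is aspherical if and only if the presheaf N_j(X) on B is aspherical. -/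
/-! The category of elements of the terminal presheaf `N_i(⊤)` is isomorphic to `A`, hence
aspherical when `A` is. By two-out-of-three, `N_i(X)` is therefore aspherical iff
`N_i(X ⟶ ⊤)` is a weak equivalence, and the hypothesis on morphisms, applied to `X ⟶ ⊤`,
transfers this from `A` to `B`. -/

open CategoryTheory CategoryTheory.Limits Simplicial

universe w v u v₁ u₁ v₂ u₂

namespace Paper

/-- The map `X ⟶ Δ[1]` constant at vertex `ε`. -/
def vertexMap (X : SSet.{u}) (ε : Fin 2) : X ⟶ Δ[1] where
  app m := TypeCat.ofHom fun _ => SSet.stdSimplex.const 1 ε m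
  naturality := by
    intro m m' f
    ext x
    apply congrArg ULift.up
    apply SimplexCategory.Hom.ext
    rfl

/-- Two maps of simplicial sets `f g : X ⟶ K` are directly homotopic if there is a
homotopy `X ⨯ Δ[1] ⟶ K` from `f` to `g`. -/
def DHomotopic {X K : SSet.{u}} (f g : X ⟶ K) : Prop :=
  ∃ H : (X ⨯ Δ[1] : SSet.{u}) ⟶ K,
    prod.lift (𝟙 X) (vertexMap X 0) ≫ H = f ∧ prod.lift (𝟙 X) (vertexMap X 1) ≫ H = g

lemma DHomotopic.precomp {X Y K : SSet.{u}} (f : X ⟶ Y) {g g' : Y ⟶ K}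
    (h : DHomotopic g g') : DHomotopic (f ≫ g) (f ≫ g') := by
  obtain ⟨H, h0, h1⟩ := h
  have key : ∀ ε : Fin 2, f ≫ vertexMap Y ε = vertexMap X ε := by
    intro ε
    apply SSet.hom_ext
    intro n
    rfl
  have e : ∀ ε : Fin 2, prod.lift (𝟙 X) (vertexMap X ε) ≫ prod.map f (𝟙 Δ[1]) =
      f ≫ prod.lift (𝟙 Y) (vertexMap Y ε) := by
    intro ε
    apply Limits.prod.hom_ext
    · simp [key ε]
    · simp [key ε]
  refine ⟨prod.map f (𝟙 _) ≫ H, ?_, ?_⟩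
  · rw [← Category.assoc, e 0, Category.assoc, h0]
  · rw [← Category.assoc, e 1, Category.assoc, h1]

/-- Homotopy classes of maps `X ⟶ K`: the quotient of `X ⟶ K` by the equivalence
relation generated by direct homotopy. -/
def HClass (X K : SSet.{u}) : Type u :=
  Quot (@DHomotopic X K)

/-- Precomposition on homotopy classes. -/
def precompHC {X Y K : SSet.{u}} (f : X ⟶ Y) : HClass Y K → HClass X K :=
  Quot.map (fun g => f ≫ g) (fun _ _ h => h.precomp f)

/-- A map of simplicial sets is a weak homotopy equivalence (in the Kan-Quillen sense)
iff for every Kan complex `K`, precomposition induces a bijection on homotopy classes. -/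
def IsWeakHomotopyEquiv {X Y : SSet.{u}} (f : X ⟶ Y) : Prop :=
  ∀ K : SSet.{u}, SSet.KanComplex K → Function.Bijective (precompHC (K := K) f)

/-- The nerve of a category, `ULift`ed so that nerves of categories in different universes
can be compared. -/
def nerveUp (A : Type u₁) [Category.{v₁} A] : SSet.{max w u₁ v₁} :=
  nerve A ⋙ CategoryTheory.uliftFunctor.{w, max u₁ v₁}

/-- The map induced by a functor on (`ULift`ed) nerves. -/
def nerveUpMap {A : Type u₁} [Category.{v₁} A] {B : Type u₂} [Category.{v₂} B]
    (F : A ⥤ B) : nerveUp.{max u₂ v₂} A ⟶ nerveUp.{max u₁ v₁} B where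
  app _ := TypeCat.ofHom fun x => ⟨x.down ⋙ F⟩
  naturality := fun _ _ _ => rfl

/-- A functor is a Thomason equivalence if its nerve is a weak homotopy equivalence of
simplicial sets. -/
def IsThomasonEquiv {A : Type u₁} [Category.{v₁} A] {B : Type u₂} [Category.{v₂} B]
    (F : A ⥤ B) : Prop :=
  IsWeakHomotopyEquiv (nerveUpMap F)

/-- A category is aspherical if its nerve is weakly contractible, i.e. the unique map
from its nerve to the terminal simplicial set is a weak homotopy equivalence. -/
def Aspherical (A : Type u₁) [Category.{v₁} A] : Prop :=
  IsWeakHomotopyEquiv (terminal.from (nerve A))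

/-- A functor `u : A ⥤ B` is aspherical if all the comma categories `u/b` are aspherical. -/
def AsphericalFunctor {A : Type u₁} [Category.{v₁} A] {B : Type u₂} [Category.{v₂} B]
    (u : A ⥤ B) : Prop :=
  ∀ b : B, Aspherical (CostructuredArrow u b)


universe u₃

variable {A : Type u} [SmallCategory A]

/-- The nerve presheaf `N_i(X) : a ↦ Hom_M(i(a), X)` associated to a functor
`i : A ⥤ M` and an object `X` of `M`. -/
def nervePresheaf {M : Type u₃} [Category.{u} M] (i : A ⥤ M) (X : M) :
    Aᵒᵖ ⥤ Type u :=
  i.op ⋙ yoneda.obj X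

/-- The morphism of presheaves `N_i(f) : N_i(X) ⟶ N_i(Y)` induced by `f : X ⟶ Y`. -/
def nervePresheafMap {M : Type u₃} [Category.{u} M] (i : A ⥤ M) {X Y : M} (f : X ⟶ Y) :
    nervePresheaf i X ⟶ nervePresheaf i Y :=
  Functor.whiskerLeft i.op (yoneda.map f)

/-- A presheaf `F` on a small category `A` is aspherical if its category of elements
`A/F` (realized as the comma category `CostructuredArrow yoneda F`) is aspherical. -/
def PresheafAspherical (F : Aᵒᵖ ⥤ Type u) : Prop :=
  Aspherical (CostructuredArrow yoneda F)

/-- A morphism of presheaves `φ : F ⟶ G` on a small category `A` is a weak equivalence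
if the induced functor `A/F ⥤ A/G` between the categories of elements is a Thomason
equivalence. -/
def PresheafWeakEquiv {F G : Aᵒᵖ ⥤ Type u} (φ : F ⟶ G) : Prop :=
  IsThomasonEquiv (CostructuredArrow.map (S := yoneda) φ)

lemma precompHC_comp {X Y Z K : SSet.{u}} (f : X ⟶ Y) (g : Y ⟶ Z) :
    precompHC (K := K) (f ≫ g) = precompHC f ∘ precompHC g := by
  funext q
  induction q using Quot.ind with
  | _ h => exact congrArg (Quot.mk _) (Category.assoc f g h)

lemma precompHC_id {X K : SSet.{u}} : precompHC (K := K) (𝟙 X) = id := by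
  funext q
  induction q using Quot.ind with
  | _ h => exact congrArg (Quot.mk _) (Category.id_comp h)

namespace IsWeakHomotopyEquiv

lemma of_iso {X Y : SSet.{u}} (e : X ≅ Y) : IsWeakHomotopyEquiv e.hom := by
  intro K _
  refine Function.bijective_iff_has_inverse.mpr ⟨precompHC e.inv, fun q => ?_, fun q => ?_⟩
  · simpa [precompHC_id] using congrFun (precompHC_comp (K := K) e.inv e.hom).symm q
  · simpa [precompHC_id] using congrFun (precompHC_comp (K := K) e.hom e.inv).symm q

lemma comp_iff_of_right {X Y Z : SSet.{u}} {f : X ⟶ Y} {g : Y ⟶ Z}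
    (hg : IsWeakHomotopyEquiv g) : IsWeakHomotopyEquiv (f ≫ g) ↔ IsWeakHomotopyEquiv f :=
  forall₂_congr fun K hK => by
    rw [precompHC_comp]
    exact Function.Bijective.of_comp_iff _ (hg K hK)

lemma comp_iff_of_left {X Y Z : SSet.{u}} {f : X ⟶ Y} {g : Y ⟶ Z}
    (hf : IsWeakHomotopyEquiv f) : IsWeakHomotopyEquiv (f ≫ g) ↔ IsWeakHomotopyEquiv g :=
  forall₂_congr fun K hK => by
    rw [precompHC_comp]
    exact Function.Bijective.of_comp_iff' (hf K hK) _

lemma terminal_from_iff_of_iso {X Y : SSet.{u}} (e : X ≅ Y) :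
    IsWeakHomotopyEquiv (terminal.from X) ↔ IsWeakHomotopyEquiv (terminal.from Y) := by
  rw [← terminal.comp_from e.hom]
  exact comp_iff_of_left (of_iso e)

end IsWeakHomotopyEquiv

def nerveUpIso (C : Type u) [Category.{u} C] : nerveUp.{u} C ≅ nerve C :=
  NatIso.ofComponents (fun _ => Equiv.toIso Equiv.ulift) (fun _ => rfl)

section Nerve

variable {C D : Type u} [Category.{u} C] [Category.{u} D]

lemma aspherical_iff_nerveUp :
    Aspherical C ↔ IsWeakHomotopyEquiv (terminal.from (nerveUp.{u} C)) :=
  (IsWeakHomotopyEquiv.terminal_from_iff_of_iso (nerveUpIso C)).symm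

lemma aspherical_iff_of_comp_eq_id (F : C ⥤ D) (G : D ⥤ C) (hFG : F ⋙ G = 𝟭 C)
    (hGF : G ⋙ F = 𝟭 D) : Aspherical C ↔ Aspherical D := by
  let e : nerveUp.{u} C ≅ nerveUp.{u} D :=
    { hom := nerveUpMap F
      inv := nerveUpMap G
      hom_inv_id := congrArg nerveUpMap hFG
      inv_hom_id := congrArg nerveUpMap hGF }
  rw [aspherical_iff_nerveUp, aspherical_iff_nerveUp]
  exact IsWeakHomotopyEquiv.terminal_from_iff_of_iso e

end Nerve

section Elements

variable {T : Aᵒᵖ ⥤ Type u}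

noncomputable def toCostructuredArrowYonedaOfIsTerminal (hT : IsTerminal T) :
    A ⥤ CostructuredArrow yoneda T where
  obj a := CostructuredArrow.mk (hT.from (yoneda.obj a))
  map g := CostructuredArrow.homMk g (hT.hom_ext _ _)

lemma toCostructuredArrowYonedaOfIsTerminal_comp_proj (hT : IsTerminal T) :
    toCostructuredArrowYonedaOfIsTerminal hT ⋙ CostructuredArrow.proj yoneda T = 𝟭 A := rfl

lemma proj_comp_toCostructuredArrowYonedaOfIsTerminal (hT : IsTerminal T) :
    CostructuredArrow.proj yoneda T ⋙ toCostructuredArrowYonedaOfIsTerminal hT = 𝟭 _ := by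
  refine CategoryTheory.Functor.hext (fun X => ?_) (fun X Y f => ?_)
  · exact (congrArg CostructuredArrow.mk (hT.hom_ext _ _)).trans
      (CostructuredArrow.eq_mk X).symm
  · obtain ⟨a, ⟨⟨⟩⟩, φ⟩ := X
    obtain ⟨b, ⟨⟨⟩⟩, ψ⟩ := Y
    obtain rfl : φ = hT.from _ := hT.hom_ext _ _
    obtain rfl : ψ = hT.from _ := hT.hom_ext _ _
    rfl

lemma presheafAspherical_iff_of_isTerminal (hT : IsTerminal T) :
    PresheafAspherical T ↔ Aspherical A :=
  (aspherical_iff_of_comp_eq_id _ _ (toCostructuredArrowYonedaOfIsTerminal_comp_proj hT)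
    (proj_comp_toCostructuredArrowYonedaOfIsTerminal hT)).symm

lemma presheafAspherical_iff_presheafWeakEquiv_of_isTerminal (hT : IsTerminal T)
    (hA : Aspherical A) {F : Aᵒᵖ ⥤ Type u} (φ : F ⟶ T) :
    PresheafAspherical F ↔ PresheafWeakEquiv φ := by
  have hTerminal := aspherical_iff_nerveUp.mp ((presheafAspherical_iff_of_isTerminal hT).mpr hA)
  rw [PresheafAspherical, aspherical_iff_nerveUp,
    ← terminal.comp_from (nerveUpMap (CostructuredArrow.map (S := yoneda) φ))]
  exact IsWeakHomotopyEquiv.comp_iff_of_right hTerminal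

end Elements

def isTerminalNervePresheaf {M : Type u₃} [Category.{u} M] (i : A ⥤ M) {X : M}
    (hX : IsTerminal X) : IsTerminal (nervePresheaf i X) :=
  IsTerminal.ofUniqueHom
    (fun _ =>
      { app a := TypeCat.ofHom fun _ => hX.from (i.obj a.unop)
        naturality _ _ _ := by ext; exact hX.hom_ext _ _ })
    (fun _ _ => by ext; exact hX.hom_ext _ _)

theorem presheafAspherical_iff_general
    {B : Type u} [SmallCategory B] {M : Type u₃} [Category.{u} M] [HasTerminal M]
    (hA : Aspherical A) (hB : Aspherical B)
    (i : A ⥤ M) (j : B ⥤ M)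
    (h : ∀ {X Y : M} (f : X ⟶ Y),
      PresheafWeakEquiv (nervePresheafMap i f) ↔ PresheafWeakEquiv (nervePresheafMap j f))
    (X : M) :
    PresheafAspherical (nervePresheaf i X) ↔ PresheafAspherical (nervePresheaf j X) := by
  rw [presheafAspherical_iff_presheafWeakEquiv_of_isTerminal
      (isTerminalNervePresheaf i terminalIsTerminal) hA (nervePresheafMap i (terminal.from X)),
    presheafAspherical_iff_presheafWeakEquiv_of_isTerminal
      (isTerminalNervePresheaf j terminalIsTerminal) hB (nervePresheafMap j (terminal.from X))]
  exact h (terminal.from X)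

/-- Let `A` and `B` be small aspherical categories, `M` a locally small category with a
terminal object, and `i : A ⥤ M`, `j : B ⥤ M` functors such that the presheaves
`N_i(i(a))` on `A` and `N_j(j(b))` on `B` are aspherical. If, for every morphism `f` of
`M`, `N_i(f)` is a weak equivalence of presheaves on `A` iff `N_j(f)` is a weak
equivalence of presheaves on `B`, then for every object `X` of `M` the presheaf `N_i(X)`
is aspherical iff the presheaf `N_j(X)` is aspherical. -/
theorem presheafAspherical_iff
    {B : Type u} [SmallCategory B] {M : Type u₃} [Category.{u} M] [HasTerminal M]
    (hA : Aspherical A) (hB : Aspherical B)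
    (i : A ⥤ M) (j : B ⥤ M)
    (h₁ : ∀ a : A, PresheafAspherical (nervePresheaf i (i.obj a)))
    (h₂ : ∀ b : B, PresheafAspherical (nervePresheaf j (j.obj b)))
    (h : ∀ {X Y : M} (f : X ⟶ Y),
      PresheafWeakEquiv (nervePresheafMap i f) ↔ PresheafWeakEquiv (nervePresheafMap j f))
    (X : M) :
    PresheafAspherical (nervePresheaf i X) ↔ PresheafAspherical (nervePresheaf j X) :=
  presheafAspherical_iff_general hA hB i j h X

end Paper
end
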